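/- Let G be a group generated by a conjugacy class D of 3-transpositions. Then for every d ∈ D, the only element of D in the coset d·Z(G) is d itself, and the second center of G equals the center: Z₂(G) = Z(G). -/

import Mathlib

/-! Prelude: 3-transposition groups. -/

section ThreeTranspositions

variable {G : Type*} [Group G]

/-- `D` is a conjugacy class of the group `G`. -/
def IsConjClass (D : Set G) : Prop := ∃ d : G, D = {x | IsConj d x}

/-- `D` is a normal set of involutions such that the product of any two of its
elements has order 1, 2 or 3; i.e. `D` is a set of 3-transpositions. -/
structure IsSetOf3Transpositions (D : Set G) : Prop where
  normal : ∀ d ∈ D, ∀ g : G, g * d * g⁻¹ ∈ D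
  involution : ∀ d ∈ D, orderOf d = 2
  orders : ∀ s ∈ D, ∀ t ∈ D, orderOf (s * t) ∈ ({1, 2, 3} : Set ℕ)

/-- `D` is of symplectic type: whenever `e, f ∈ D` generate a subgroup isomorphic
to `Sym(3)`, every `d ∈ D` commutes with at least one of `e`, `f`, `efe`. -/
def IsSymplecticType (D : Set G) : Prop :=
  ∀ d ∈ D, ∀ e ∈ D, ∀ f ∈ D,
    Nonempty (↥(Subgroup.closure ({e, f} : Set G)) ≃* Equiv.Perm (Fin 3)) →
      Commute d e ∨ Commute d f ∨ Commute d (e * f * e)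

/-- `H` is isomorphic to a central quotient `W/Z` (`Z ≤ Z(W)`) of the group `W`. -/
def IsCentralQuotientOf (W : Type*) [Group W] (H : Type*) [Group H] : Prop :=
  ∃ φ : W →* H, Function.Surjective φ ∧ φ.ker ≤ Subgroup.center W

end ThreeTranspositions

/-!
Let `d, dz ∈ D` with `z ≠ 1` central. Then `d` is not central, since otherwise `dz`, being
conjugate to `d`, would equal `d`; so some `e ∈ D` fails to commute with `d`, and `ed` has
order 3. As `z² = 1`, the product `e(dz) = (ed)z` of two 3-transpositions would then have
order `3 · |z| = 6`. For `g ∈ Z₂(G)` and `d ∈ D` the conjugate `gdg⁻¹ = d[g, d]` therefore lies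
in `dZ(G) ∩ D = {d}`, so `g` centralises the generating set `D`.
-/

section

open Subgroup
open scoped commutatorElement

variable {G : Type*} [Group G]

theorem Subgroup.mem_center_of_forall_commute {S : Set G} (hS : closure S = ⊤) {g : G}
    (h : ∀ s ∈ S, Commute g s) : g ∈ center G := by
  rw [center_eq_iInf hS]
  simp only [mem_iInf, mem_centralizer_singleton_iff]
  exact fun s hs => (h s hs).eq

theorem commute_of_sq_eq_one {s t : G} (hs : s ^ 2 = 1) (ht : t ^ 2 = 1) (hst : (s * t) ^ 2 = 1) :
    Commute s t := by
  rw [pow_two] at hs ht hst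
  calc s * t = (s * t)⁻¹ := eq_inv_of_mul_eq_one_left hst
    _ = t * s := by rw [mul_inv_rev, inv_eq_of_mul_eq_one_right hs, inv_eq_of_mul_eq_one_right ht]

theorem eq_one_of_orderOf_mul_le_three {a z : G} (ha : orderOf a = 3) (hz : z ^ 2 = 1)
    (haz : Commute a z) (h : orderOf (a * z) ≤ 3) : z = 1 := by
  have hz2 : orderOf z ∣ 2 := orderOf_dvd_of_pow_eq_one hz
  have hcop : (orderOf a).Coprime (orderOf z) :=
    Nat.Coprime.coprime_dvd_right hz2 (by rw [ha]; norm_num)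
  rw [haz.orderOf_mul_eq_mul_orderOf_of_coprime hcop, ha] at h
  have hpos : 0 < orderOf z := Nat.pos_of_dvd_of_pos hz2 two_pos
  exact orderOf_eq_one_iff.mp (by omega)

theorem IsConjClass.isConj {D : Set G} (hD : IsConjClass D) {x y : G} (hx : x ∈ D)
    (hy : y ∈ D) : IsConj x y := by
  obtain ⟨d, rfl⟩ := hD
  exact hx.symm.trans hy

namespace IsSetOf3Transpositions

variable {D : Set G} (h3t : IsSetOf3Transpositions D)
include h3t

theorem sq_eq_one {d : G} (hd : d ∈ D) : d ^ 2 = 1 := by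
  rw [← h3t.involution d hd]
  exact pow_orderOf_eq_one d

theorem orderOf_mul_le_three {s t : G} (hs : s ∈ D) (ht : t ∈ D) : orderOf (s * t) ≤ 3 := by
  have h := h3t.orders s hs t ht
  simp only [Set.mem_insert_iff, Set.mem_singleton_iff] at h
  omega

theorem orderOf_mul_eq_three {s t : G} (hs : s ∈ D) (ht : t ∈ D) (hst : ¬Commute s t) :
    orderOf (s * t) = 3 := by
  rcases h3t.orders s hs t ht with h | h | h
  · exact absurd (commute_of_sq_eq_one (h3t.sq_eq_one hs) (h3t.sq_eq_one ht)
      (orderOf_dvd_iff_pow_eq_one.mp (by rw [h]; norm_num))) hst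
  · exact absurd (commute_of_sq_eq_one (h3t.sq_eq_one hs) (h3t.sq_eq_one ht)
      (orderOf_dvd_iff_pow_eq_one.mp (by rw [h]))) hst
  · exact h

theorem eq_one_of_mul_mem_of_not_mem_center (hgen : closure D = ⊤) {d z : G} (hd : d ∈ D)
    (hdc : d ∉ center G) (hz : z ∈ center G) (hdz : d * z ∈ D) : z = 1 := by
  obtain ⟨e, he, hed⟩ : ∃ e ∈ D, ¬Commute e d := by
    by_contra! h
    exact hdc (mem_center_of_forall_commute hgen fun e he => (h e he).symm)
  have hcomm : ∀ x, Commute x z := fun x => mem_center_iff.mp hz x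
  have hz2 : z ^ 2 = 1 := by
    rw [← h3t.sq_eq_one hdz, (hcomm d).mul_pow, h3t.sq_eq_one hd, one_mul]
  refine eq_one_of_orderOf_mul_le_three (h3t.orderOf_mul_eq_three he hd hed) hz2 (hcomm _) ?_
  rw [mul_assoc]
  exact h3t.orderOf_mul_le_three he hdz

theorem mul_eq_self_of_mem_center (hclass : IsConjClass D) (hgen : closure D = ⊤) {d z : G}
    (hd : d ∈ D) (hz : z ∈ center G) (hdz : d * z ∈ D) : d * z = d := by
  by_cases hdc : d ∈ center G
  · exact ((hclass.isConj hd hdz).eq_of_left_mem_center hdc).symm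
  · rw [h3t.eq_one_of_mul_mem_of_not_mem_center hgen hd hdc hz hdz, mul_one]

theorem upperCentralSeries_two_eq_center (hclass : IsConjClass D) (hgen : closure D = ⊤) :
    Subgroup.upperCentralSeries G 2 = center G := by
  refine le_antisymm (fun g hg => mem_center_of_forall_commute hgen fun d hd => ?_)
    (Subgroup.upperCentralSeries_one G ▸ Subgroup.upperCentralSeries_mono G one_le_two)
  have hc : ⁅g, d⁆ ∈ center G :=
    Subgroup.upperCentralSeries_one G ▸ Subgroup.mem_upperCentralSeries_succ_iff.mp hg d
  have hconj : g * d * g⁻¹ = d * ⁅g, d⁆ := by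
    rw [mem_center_iff.mp hc d, commutatorElement_def]; group
  have := h3t.mul_eq_self_of_mem_center hclass hgen hd hc (hconj ▸ h3t.normal d hd g)
  exact commutatorElement_eq_one_iff_commute.mp (mul_eq_left.mp this)

end IsSetOf3Transpositions

end

theorem statement_10 {G : Type*} [Group G] (D : Set G)
    (hclass : IsConjClass D)
    (h3t : IsSetOf3Transpositions D)
    (hgen : Subgroup.closure D = ⊤) :
    (∀ d ∈ D, ∀ z ∈ Subgroup.center G, d * z ∈ D → d * z = d) ∧
    upperCentralSeries G 2 = Subgroup.center G :=
  ⟨fun _ hd _ hz hdz => h3t.mul_eq_self_of_mem_center hclass hgen hd hz hdz,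
    h3t.upperCentralSeries_two_eq_center hclass hgen⟩
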